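/- Fix α > 0, κ ≥ 0, β > 0 and t ∈ ℝ. For each γ > 0 with β·(α+γ) < 4, let p*(γ) denote the unique fixed point in [0,1] of the logit map with parameters (α, γ, κ, β, t). Then p* is strictly increasing in γ: if 0 < γ₁ < γ₂ and β·(α+γ₂) < 4, then p*(γ₁) < p*(γ₂). -/

import Mathlib

/-!
The logit map is the sigmoid of an affine function of `p` whose slope `β(α+γ)` grows with
`γ`. A fixed point is positive, so raising `γ` from `γ₁` to `γ₂` pushes `L(p₁)` strictly above
`p₁`. Because `σ' = σ(1-σ) ≤ 1/4`, the contraction condition `β(α+γ₂) < 4` makes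
`p ↦ p - L(p)` strictly increasing; it is negative at `p₁` and vanishes at `p₂`, so `p₁ < p₂`.
-/

open Real

/-- The logit map with status-quo bias: `L_t(p) = 1/(1 + exp(β(α − κ − p(α+γ) + t)))`. -/
noncomputable def logitMap (α γ κ β t p : ℝ) : ℝ :=
  1 / (1 + Real.exp (β * (α - κ - p * (α + γ) + t)))

lemma sigmoid_mul_one_sub_sigmoid_le (x : ℝ) : sigmoid x * (1 - sigmoid x) ≤ 1 / 4 := by
  nlinarith [sq_nonneg (2 * sigmoid x - 1)]

lemma sigmoid_mul_one_sub_sigmoid_pos (x : ℝ) : 0 < sigmoid x * (1 - sigmoid x) :=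
  mul_pos (sigmoid_pos x) (sub_pos.mpr (sigmoid_lt_one x))

section logitMap

variable (α γ κ β t : ℝ)

lemma logitMap_eq_sigmoid (p : ℝ) :
    logitMap α γ κ β t p = sigmoid (β * ((α + γ) * p - (α - κ + t))) := by
  rw [logitMap, sigmoid_def, one_div]
  ring_nf

lemma logitMap_pos (p : ℝ) : 0 < logitMap α γ κ β t p := by
  rw [logitMap_eq_sigmoid]
  exact sigmoid_pos _

lemma hasDerivAt_logitMap (p : ℝ) :
    HasDerivAt (logitMap α γ κ β t)
      (β * (α + γ) * (sigmoid (β * ((α + γ) * p - (α - κ + t))) *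
        (1 - sigmoid (β * ((α + γ) * p - (α - κ + t)))))) p := by
  have hinner : HasDerivAt (fun q => β * ((α + γ) * q - (α - κ + t))) (β * (α + γ)) p := by
    simpa using (((hasDerivAt_id p).const_mul (α + γ)).sub_const (α - κ + t)).const_mul β
  rw [funext (logitMap_eq_sigmoid α γ κ β t), mul_comm (β * (α + γ))]
  exact (hasDerivAt_sigmoid _).comp p hinner

variable {α γ κ β t}

lemma strictMono_sub_logitMap (hcontr : β * (α + γ) < 4) :
    StrictMono fun p => p - logitMap α γ κ β t p := by
  refine strictMono_of_hasDerivAt_pos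
    (fun p => (hasDerivAt_id p).sub (hasDerivAt_logitMap α γ κ β t p)) fun p => ?_
  set u := β * ((α + γ) * p - (α - κ + t))
  have hs_pos := sigmoid_mul_one_sub_sigmoid_pos u
  have hs_le := sigmoid_mul_one_sub_sigmoid_le u
  have : β * (α + γ) * (sigmoid u * (1 - sigmoid u)) < 1 := by nlinarith
  linarith

lemma logitMap_lt_logitMap_of_lt {γ₁ γ₂ p : ℝ} (hβ : 0 < β) (hp : 0 < p) (hγ : γ₁ < γ₂) :
    logitMap α γ₁ κ β t p < logitMap α γ₂ κ β t p := by
  rw [logitMap_eq_sigmoid, logitMap_eq_sigmoid]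
  exact sigmoid_lt (by gcongr)

end logitMap

theorem stmt_5_general (α κ β t : ℝ) (hβ : 0 < β)
    (γ₁ γ₂ p₁ p₂ : ℝ) (hγ : γ₁ < γ₂)
    (hcontr : β * (α + γ₂) < 4)
    (hfix₁ : logitMap α γ₁ κ β t p₁ = p₁)
    (hfix₂ : logitMap α γ₂ κ β t p₂ = p₂) :
    p₁ < p₂ := by
  have hp₁ : 0 < p₁ := hfix₁ ▸ logitMap_pos α γ₁ κ β t p₁
  have hbelow : p₁ < logitMap α γ₂ κ β t p₁ :=
    hfix₁.symm.trans_lt (logitMap_lt_logitMap_of_lt hβ hp₁ hγ)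
  refine (strictMono_sub_logitMap (κ := κ) (t := t) hcontr).lt_iff_lt.mp ?_
  simpa only [hfix₂, sub_self, sub_neg] using hbelow

/-- Under the contraction condition, the QRE-SB equilibrium probability `p*(γ)`
(the unique fixed point of the logit map in `[0,1]`) is strictly increasing in `γ`:
if `0 < γ₁ < γ₂` and `β(α+γ₂) < 4`, then `p*(γ₁) < p*(γ₂)`. -/
theorem stmt_5 (α κ β t : ℝ) (hα : 0 < α) (hκ : 0 ≤ κ) (hβ : 0 < β)
    (γ₁ γ₂ p₁ p₂ : ℝ) (hγ₁ : 0 < γ₁) (hγ : γ₁ < γ₂)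
    (hcontr : β * (α + γ₂) < 4)
    (hp₁ : p₁ ∈ Set.Icc (0 : ℝ) 1) (hfix₁ : logitMap α γ₁ κ β t p₁ = p₁)
    (hp₂ : p₂ ∈ Set.Icc (0 : ℝ) 1) (hfix₂ : logitMap α γ₂ κ β t p₂ = p₂) :
    p₁ < p₂ :=
  stmt_5_general α κ β t hβ γ₁ γ₂ p₁ p₂ hγ hcontr hfix₁ hfix₂
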